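/- arXiv:2106.02865 — 6 statements merged into one kernel-verified Lean document; each statement's English description precedes it below -/
import Mathlib

section
/- Let m ≥ 2 be a positive integer and let D_1, …, D_m be n×n real matrices with nonnegative entries and strictly positive diagonal entries. Then there exists a constant γ > 0 (depending on D_1, …, D_m) such that the entrywise inequality (D_1 D_2 ⋯ D_m)_{ij} ≥ γ (D_1 + D_2 + ⋯ + D_m)_{ij} holds for all i, j. -/
/-!
Let `d > 0` bound every diagonal entry of every `D k` from below. For entrywise nonnegative
matrices, `(P * A * Q) i j ≥ P i i * A i j * Q j j`, and the diagonal of a product of `r` such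
factors is at least `d ^ r`. Splitting the product around the factor `D k` therefore gives
`(D 0 ⋯ D (m-1)) i j ≥ d ^ (m - 1) * D k i j` for every `k`; averaging over `k` yields
`γ = d ^ (m - 1) / m`.
-/

namespace Matrix

variable {ι R : Type*} [Fintype ι] [CommSemiring R] [PartialOrder R] [IsOrderedRing R]

theorem mul_apply_nonneg {l m n : Type*} [Fintype m] {A : Matrix l m R} {B : Matrix m n R}
    (hA : ∀ i j, 0 ≤ A i j) (hB : ∀ i j, 0 ≤ B i j) (i : l) (j : n) : 0 ≤ (A * B) i j :=
  Finset.sum_nonneg fun k _ => mul_nonneg (hA i k) (hB k j)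

theorem mul_apply_le_of_nonneg {l m n : Type*} [Fintype m] {A : Matrix l m R}
    {B : Matrix m n R} (hA : ∀ i j, 0 ≤ A i j) (hB : ∀ i j, 0 ≤ B i j) (i : l) (k : m) (j : n) :
    A i k * B k j ≤ (A * B) i j :=
  Finset.single_le_sum (f := fun x => A i x * B x j)
    (fun x _ => mul_nonneg (hA i x) (hB x j)) (Finset.mem_univ k)

theorem diag_mul_mul_diag_le {P A Q : Matrix ι ι R} (hP : ∀ i j, 0 ≤ P i j)
    (hA : ∀ i j, 0 ≤ A i j) (hQ : ∀ i j, 0 ≤ Q i j) (i j : ι) :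
    P i i * A i j * Q j j ≤ (P * A * Q) i j :=
  calc P i i * A i j * Q j j ≤ (P * A) i j * Q j j :=
        mul_le_mul_of_nonneg_right (mul_apply_le_of_nonneg hP hA i i j) (hQ j j)
    _ ≤ (P * A * Q) i j := mul_apply_le_of_nonneg (mul_apply_nonneg hP hA) hQ i j j

variable [DecidableEq ι]

theorem list_prod_apply_nonneg {L : List (Matrix ι ι R)} (hL : ∀ A ∈ L, ∀ i j, 0 ≤ A i j)
    (i j : ι) : 0 ≤ L.prod i j := by
  induction L generalizing i j with
  | nil =>
    rw [List.prod_nil, one_apply]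
    split <;> simp
  | cons A T ih =>
    rw [List.prod_cons]
    exact mul_apply_nonneg (hL A List.mem_cons_self)
      (ih fun B hB => hL B (List.mem_cons_of_mem A hB)) i j

theorem pow_length_le_list_prod_apply_self {L : List (Matrix ι ι R)} {d : R} (hd : 0 ≤ d)
    (hnn : ∀ A ∈ L, ∀ i j, 0 ≤ A i j) (hdiag : ∀ A ∈ L, ∀ i, d ≤ A i i) (i : ι) :
    d ^ L.length ≤ L.prod i i := by
  induction L with
  | nil => simp
  | cons A T ih =>
    have hT := ih (fun B hB => hnn B (List.mem_cons_of_mem A hB))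
      (fun B hB => hdiag B (List.mem_cons_of_mem A hB))
    rw [List.prod_cons, List.length_cons, pow_succ']
    calc d * d ^ T.length ≤ A i i * T.prod i i :=
          mul_le_mul (hdiag A List.mem_cons_self i) hT (pow_nonneg hd _)
            (hd.trans (hdiag A List.mem_cons_self i))
      _ ≤ (A * T.prod) i i :=
          mul_apply_le_of_nonneg (hnn A List.mem_cons_self)
            (list_prod_apply_nonneg fun B hB => hnn B (List.mem_cons_of_mem A hB)) i i i

theorem pow_length_pred_mul_le_list_prod_apply {L : List (Matrix ι ι R)} {d : R} (hd : 0 ≤ d)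
    (hnn : ∀ A ∈ L, ∀ i j, 0 ≤ A i j) (hdiag : ∀ A ∈ L, ∀ i, d ≤ A i i)
    {A : Matrix ι ι R} (hA : A ∈ L) (i j : ι) :
    d ^ (L.length - 1) * A i j ≤ L.prod i j := by
  obtain ⟨s, t, rfl⟩ := List.append_of_mem hA
  have hs_nn : ∀ B ∈ s, ∀ i j, 0 ≤ B i j := fun B hB => hnn B (by simp [hB])
  have ht_nn : ∀ B ∈ t, ∀ i j, 0 ≤ B i j := fun B hB => hnn B (by simp [hB])
  have hs := pow_length_le_list_prod_apply_self hd hs_nn (fun B hB => hdiag B (by simp [hB])) i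
  have ht := pow_length_le_list_prod_apply_self hd ht_nn (fun B hB => hdiag B (by simp [hB])) j
  have hlen : (s ++ A :: t).length - 1 = s.length + t.length := by simp
  have hA_nn : 0 ≤ A i j := hnn A hA i j
  have hsA_nn : 0 ≤ s.prod i i * A i j := mul_nonneg (list_prod_apply_nonneg hs_nn i i) hA_nn
  rw [List.prod_append, List.prod_cons, ← Matrix.mul_assoc, hlen, pow_add]
  calc d ^ s.length * d ^ t.length * A i j = d ^ s.length * A i j * d ^ t.length := by ring
    _ ≤ s.prod i i * A i j * t.prod j j := by gcongr
    _ ≤ (s.prod * A * t.prod) i j :=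
        diag_mul_mul_diag_le (list_prod_apply_nonneg hs_nn) (hnn A hA)
          (list_prod_apply_nonneg ht_nn) i j

end Matrix

theorem Finite.exists_gt_le_of_forall_gt {α β : Type*} [Finite α] [LinearOrder β] [NoMaxOrder β]
    {b : β} (f : α → β) (hf : ∀ a, b < f a) : ∃ c, b < c ∧ ∀ a, c ≤ f a := by
  cases isEmpty_or_nonempty α
  · obtain ⟨c, hc⟩ := exists_gt b
    exact ⟨c, hc, isEmptyElim⟩
  · obtain ⟨a₀, ha₀⟩ := Finite.exists_min f
    exact ⟨f a₀, hf a₀, ha₀⟩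

/-- For `m ≥ 2` nonnegative `n × n` matrices `D 0, …, D (m-1)` with strictly
positive diagonal entries, there exists `γ > 0` such that, entrywise,
`D 0 * D 1 * ⋯ * D (m-1) ≥ γ • (D 0 + D 1 + ⋯ + D (m-1))`. -/
theorem prod_ge_smul_sum_of_nonneg_posDiag (n m : ℕ) (hm : 2 ≤ m)
    (D : Fin m → Matrix (Fin n) (Fin n) ℝ)
    (hnn : ∀ k : Fin m, ∀ i j : Fin n, 0 ≤ D k i j)
    (hdiag : ∀ k : Fin m, ∀ i : Fin n, 0 < D k i i) :
    ∃ γ : ℝ, 0 < γ ∧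
      ∀ i j : Fin n, γ * (∑ k, D k i j) ≤ (List.ofFn D).prod i j := by
  obtain ⟨d, hd, hd_le⟩ :=
    Finite.exists_gt_le_of_forall_gt (fun p : Fin m × Fin n => D p.1 p.2 p.2) fun p => hdiag p.1 p.2
  have hL_nn : ∀ A ∈ List.ofFn D, ∀ i j, 0 ≤ A i j := by
    simp only [List.mem_ofFn, forall_exists_index, forall_apply_eq_imp_iff]
    exact hnn
  have hL_diag : ∀ A ∈ List.ofFn D, ∀ i, d ≤ A i i := by
    simp only [List.mem_ofFn, forall_exists_index, forall_apply_eq_imp_iff]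
    exact fun k i => hd_le (k, i)
  have hm₀ : (0 : ℝ) < m := Nat.cast_pos.2 (by omega)
  refine ⟨d ^ (m - 1) / m, by positivity, fun i j => ?_⟩
  have hk (k : Fin m) : d ^ (m - 1) * D k i j ≤ (List.ofFn D).prod i j := by
    simpa using
      Matrix.pow_length_pred_mul_le_list_prod_apply hd.le hL_nn hL_diag (List.mem_ofFn.2 ⟨k, rfl⟩) i j
  calc d ^ (m - 1) / m * ∑ k, D k i j = (∑ k, d ^ (m - 1) * D k i j) / m := by
        rw [div_mul_eq_mul_div, Finset.mul_sum]
    _ ≤ (Finset.univ.card • (List.ofFn D).prod i j) / m :=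
        div_le_div_of_nonneg_right (Finset.sum_le_card_nsmul _ _ _ fun k _ => hk k) hm₀.le
    _ = (List.ofFn D).prod i j := by simp [nsmul_eq_mul, hm₀.ne']
end

section
/- Let B be an N×N row stochastic matrix with strictly positive diagonal entries, and suppose the directed graph associated with B contains a directed spanning tree. Then B is SIA; that is, there exists a vector c ∈ ℝ^N such that B^k converges to 1_N cᵀ as k → ∞. -/
/-!
Positive diagonal entries make positivity of `(B ^ k) i r` persist as `k` grows, and the spanning
tree rooted at `r` gives each `i` some such `k`; so some power `M = B ^ K` has a positive column
`r`. For a vector `x`, the maximum of `B ^ k *ᵥ x` cannot increase and its minimum cannot decrease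
(each row of `B` is a convex weight), while `M` shrinks their gap by the factor
`1 - min_i M i r < 1`, as every row of `M` puts weight at least `min_i M i r` on `x r`. So the
maximum and the minimum converge to a common limit, which squeezes every entry; applied to the
standard basis vectors this makes each column of `B ^ k` converge to a constant vector.
-/

open Matrix Filter Topology

theorem exists_tendsto_of_monotone_of_antitone_of_sub_le {I S : ℕ → ℝ} (hI : Monotone I)
    (hS : Antitone S) (hIS : ∀ k, I k ≤ S k) {q : ℝ} (hq : q < 1) {K : ℕ}
    (hcontr : ∀ k, S (k + K) - I (k + K) ≤ q * (S k - I k)) :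
    ∃ c, Tendsto I atTop (𝓝 c) ∧ Tendsto S atTop (𝓝 c) := by
  have hIlim : Tendsto I atTop (𝓝 (⨆ k, I k)) :=
    tendsto_atTop_ciSup hI ⟨S 0, by rintro _ ⟨k, rfl⟩; exact (hIS k).trans (hS k.zero_le)⟩
  have hSlim : Tendsto S atTop (𝓝 (⨅ k, S k)) :=
    tendsto_atTop_ciInf hS ⟨I 0, by rintro _ ⟨k, rfl⟩; exact (hI k.zero_le).trans (hIS k)⟩
  have hgap := hSlim.sub hIlim
  have hle : (⨅ k, S k) - ⨆ k, I k ≤ q * ((⨅ k, S k) - ⨆ k, I k) :=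
    le_of_tendsto_of_tendsto' (hgap.comp (tendsto_add_atTop_nat K)) (hgap.const_mul q) hcontr
  have hge : ⨆ k, I k ≤ ⨅ k, S k := le_of_tendsto_of_tendsto' hIlim hSlim hIS
  have hlim_eq : ⨅ k, S k = ⨆ k, I k := by nlinarith
  exact ⟨_, hIlim, hlim_eq ▸ hSlim⟩

namespace Matrix

variable {m n o : Type*} [Fintype n]

theorem mul_apply_pos_of_pos {A : Matrix m n ℝ} {C : Matrix n o ℝ} (hA : ∀ i j, 0 ≤ A i j)
    (hC : ∀ i j, 0 ≤ C i j) {i : m} {k : n} {j : o} (hAik : 0 < A i k) (hCkj : 0 < C k j) :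
    0 < (A * C) i j :=
  (mul_pos hAik hCkj).trans_le <| Finset.single_le_sum (f := fun k => A i k * C k j)
    (fun k _ => mul_nonneg (hA i k) (hC k j)) (Finset.mem_univ k)

variable [DecidableEq n]

section Graph

variable {B : Matrix n n ℝ}

theorem pow_apply_pos_of_le (hnn : ∀ i j, 0 ≤ B i j) (hdiag : ∀ i, 0 < B i i) {i j : n} {k l : ℕ}
    (hk : 0 < (B ^ k) i j) (hkl : k ≤ l) : 0 < (B ^ l) i j := by
  induction l, hkl using Nat.le_induction with
  | base => exact hk
  | succ l _ ih =>
    rw [pow_succ']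
    exact mul_apply_pos_of_pos hnn (pow_apply_nonneg hnn l) (hdiag i) ih

theorem exists_pow_apply_pos_of_reflTransGen (hnn : ∀ i j, 0 ≤ B i j) {i j : n}
    (h : Relation.ReflTransGen (fun j i => 0 < B i j) j i) : ∃ k, 0 < (B ^ k) i j := by
  induction h with
  | refl => exact ⟨0, by simp⟩
  | tail _ hedge ih =>
    obtain ⟨k, hk⟩ := ih
    refine ⟨k + 1, ?_⟩
    rw [pow_succ']
    exact mul_apply_pos_of_pos hnn (pow_apply_nonneg hnn k) hedge hk

theorem exists_pow_forall_apply_pos (hnn : ∀ i j, 0 ≤ B i j) (hdiag : ∀ i, 0 < B i i) {r : n}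
    (hr : ∀ i, Relation.ReflTransGen (fun j i => 0 < B i j) r i) :
    ∃ K, ∀ i, 0 < (B ^ K) i r := by
  choose k hk using fun i => exists_pow_apply_pos_of_reflTransGen hnn (hr i)
  exact ⟨Finset.univ.sup k, fun i =>
    pow_apply_pos_of_le hnn hdiag (hk i) (Finset.le_sup (Finset.mem_univ i))⟩

end Graph

section RowStochastic

variable {M : Matrix n n ℝ}

theorem mulVec_apply_le_sub_of_mem_rowStochastic (hM : M ∈ rowStochastic ℝ n) {x : n → ℝ}
    {S : ℝ} (hS : ∀ l, x l ≤ S) (i r : n) : (M *ᵥ x) i ≤ S - M i r * (S - x r) := by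
  have hsum : S - (M *ᵥ x) i = ∑ l, M i l * (S - x l) := by
    simp only [mulVec, dotProduct, mul_sub, Finset.sum_sub_distrib, ← Finset.sum_mul,
      sum_row_of_mem_rowStochastic hM, one_mul]
  have hterm : M i r * (S - x r) ≤ ∑ l, M i l * (S - x l) :=
    Finset.single_le_sum (f := fun l => M i l * (S - x l))
      (fun l _ => mul_nonneg (nonneg_of_mem_rowStochastic hM) (sub_nonneg.2 (hS l)))
      (Finset.mem_univ r)
  linarith

theorem add_le_mulVec_apply_of_mem_rowStochastic (hM : M ∈ rowStochastic ℝ n) {x : n → ℝ}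
    {I : ℝ} (hI : ∀ l, I ≤ x l) (i r : n) : I + M i r * (x r - I) ≤ (M *ᵥ x) i := by
  have := mulVec_apply_le_sub_of_mem_rowStochastic hM (x := -x) (S := -I)
    (fun l => neg_le_neg (hI l)) i r
  simp only [mulVec_neg, Pi.neg_apply] at this
  linarith

variable [Nonempty n]

theorem ciSup_mulVec_le_of_mem_rowStochastic (hM : M ∈ rowStochastic ℝ n) (x : n → ℝ) :
    ⨆ i, (M *ᵥ x) i ≤ ⨆ i, x i :=
  ciSup_le fun i =>
    (mulVec_apply_le_sub_of_mem_rowStochastic hM (Finite.le_ciSup x) i i).trans <| sub_le_self _ <|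
      mul_nonneg (nonneg_of_mem_rowStochastic hM) (sub_nonneg.2 (Finite.le_ciSup x i))

theorem ciInf_le_ciInf_mulVec_of_mem_rowStochastic (hM : M ∈ rowStochastic ℝ n) (x : n → ℝ) :
    ⨅ i, x i ≤ ⨅ i, (M *ᵥ x) i :=
  le_ciInf fun i => (le_add_of_nonneg_right <| mul_nonneg (nonneg_of_mem_rowStochastic hM)
    (sub_nonneg.2 (Finite.ciInf_le x i))).trans
    (add_le_mulVec_apply_of_mem_rowStochastic hM (Finite.ciInf_le x) i i)

theorem ciSup_sub_ciInf_mulVec_le_of_mem_rowStochastic (hM : M ∈ rowStochastic ℝ n) {r : n}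
    {δ : ℝ} (hδ : ∀ i, δ ≤ M i r) (x : n → ℝ) :
    (⨆ i, (M *ᵥ x) i) - ⨅ i, (M *ᵥ x) i ≤ (1 - δ) * ((⨆ i, x i) - ⨅ i, x i) := by
  have hSr : x r ≤ ⨆ i, x i := Finite.le_ciSup x r
  have hIr : ⨅ i, x i ≤ x r := Finite.ciInf_le x r
  have hupper : ⨆ i, (M *ᵥ x) i ≤ (⨆ i, x i) - δ * ((⨆ i, x i) - x r) := ciSup_le fun i => by
    have := mulVec_apply_le_sub_of_mem_rowStochastic hM (Finite.le_ciSup x) i r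
    nlinarith [hδ i]
  have hlower : (⨅ i, x i) + δ * (x r - ⨅ i, x i) ≤ ⨅ i, (M *ᵥ x) i := le_ciInf fun i => by
    have := add_le_mulVec_apply_of_mem_rowStochastic hM (Finite.ciInf_le x) i r
    nlinarith [hδ i]
  linarith

end RowStochastic

variable {B : Matrix n n ℝ}

theorem exists_tendsto_pow_mulVec_of_forall_pow_apply_pos (hB : B ∈ rowStochastic ℝ n) {K : ℕ}
    {r : n} (hK : ∀ i, 0 < (B ^ K) i r) (v : n → ℝ) :
    ∃ c : ℝ, Tendsto (fun k => B ^ k *ᵥ v) atTop (𝓝 fun _ => c) := by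
  have : Nonempty n := ⟨r⟩
  set x : ℕ → n → ℝ := fun k => B ^ k *ᵥ v
  have hstep (k m : ℕ) : x (k + m) = B ^ m *ᵥ x k := by
    simp only [x, add_comm k, pow_add, mulVec_mulVec]
  obtain ⟨i₀, hi₀⟩ := exists_eq_ciInf_of_finite (f := fun i => (B ^ K) i r)
  have hinf_mono : Monotone fun k => ⨅ i, x k i := monotone_nat_of_le_succ fun k => by
    have := ciInf_le_ciInf_mulVec_of_mem_rowStochastic (pow_mem hB 1) (x k)
    rwa [← hstep] at this
  have hsup_anti : Antitone fun k => ⨆ i, x k i := antitone_nat_of_succ_le fun k => by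
    have := ciSup_mulVec_le_of_mem_rowStochastic (pow_mem hB 1) (x k)
    rwa [← hstep] at this
  have hcontr (k : ℕ) : (⨆ i, x (k + K) i) - ⨅ i, x (k + K) i ≤
      (1 - (B ^ K) i₀ r) * ((⨆ i, x k i) - ⨅ i, x k i) := by
    have := ciSup_sub_ciInf_mulVec_le_of_mem_rowStochastic (pow_mem hB K)
      (fun i => hi₀ ▸ Finite.ciInf_le (fun i => (B ^ K) i r) i) (x k)
    rwa [← hstep] at this
  obtain ⟨c, hinf, hsup⟩ := exists_tendsto_of_monotone_of_antitone_of_sub_le hinf_mono hsup_anti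
    (fun k => ciInf_le_ciSup (Finite.bddBelow_range _) (Finite.bddAbove_range _))
    (sub_lt_self 1 (hK i₀)) hcontr
  exact ⟨c, tendsto_pi_nhds.2 fun i => tendsto_of_tendsto_of_tendsto_of_le_of_le hinf hsup
    (fun k => Finite.ciInf_le _ i) (fun k => Finite.le_ciSup _ i)⟩

theorem exists_tendsto_pow_of_forall_pow_apply_pos (hB : B ∈ rowStochastic ℝ n) {K : ℕ} {r : n}
    (hK : ∀ i, 0 < (B ^ K) i r) :
    ∃ c : n → ℝ, Tendsto (fun k => B ^ k) atTop (𝓝 (of fun _ j => c j)) := by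
  choose c hc using fun j =>
    exists_tendsto_pow_mulVec_of_forall_pow_apply_pos hB hK (Pi.single j 1)
  refine ⟨c, tendsto_pi_nhds.2 fun i => tendsto_pi_nhds.2 fun j => ?_⟩
  simpa using tendsto_pi_nhds.1 (hc j) i

end Matrix

/-- A row stochastic matrix `B` with strictly positive diagonal entries whose
associated directed graph (an edge from `j` to `i` whenever `i ≠ j` and `B i j > 0`) contains a
directed spanning tree is SIA: its powers `B ^ k` converge to `1_N cᵀ` for some `c ∈ ℝᴺ`. -/
theorem rowStochastic_posDiag_spanningTree_isSIA (N : ℕ) (B : Matrix (Fin N) (Fin N) ℝ)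
    (hnn : ∀ i j : Fin N, 0 ≤ B i j)
    (hrow : ∀ i : Fin N, ∑ j, B i j = 1)
    (hdiag : ∀ i : Fin N, 0 < B i i)
    (htree : ∃ r : Fin N, ∀ i : Fin N,
      Relation.ReflTransGen (fun j i : Fin N => i ≠ j ∧ 0 < B i j) r i) :
    ∃ c : Fin N → ℝ,
      Tendsto (fun k : ℕ => B ^ k) atTop (𝓝 (Matrix.of fun _ j : Fin N => c j)) := by
  obtain ⟨r, hr⟩ := htree
  obtain ⟨K, hK⟩ := exists_pow_forall_apply_pos hnn hdiag fun i =>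
    Relation.ReflTransGen.mono (fun _ _ h => h.2) _ _ (hr i)
  exact exists_tendsto_pow_of_forall_pow_apply_pos (mem_rowStochastic_iff_sum.2 ⟨hnn, hrow⟩) hK
end

section
/- Let α > 0 and 0 < β < 1, let t_0 < t_1 < t_2 < ⋯ be a strictly increasing unbounded sequence, and let V : ℝ → ℝ be a nonnegative function such that: (i) on each interval (t_k, t_{k+1}), V is differentiable with V'(t) ≤ -α V(t), and V is continuous from the left at t_{k+1} (so V(t_{k+1}) equals its limit from within the interval); (ii) at each reset time t_k (k ≥ 1), the right limit V(t_k⁺) satisfies V(t_k⁺) ≤ β V(t_k); (iii) V(t_0⁺) ≤ V_0. Then for every k ≥ 0 and every t ∈ (t_k, t_{k+1}], V(t) ≤ V_0 · β^k · e^{-α (t - t_0)}. -/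
/-!
On each inter-reset interval `(tₖ, tₖ₊₁]` the product `e^{α s} V(s)` is antitone, since its
derivative is `e^{α s} (V' + α V) ≤ 0`; comparing with its right limit at `tₖ` gives
`V(s) ≤ V(tₖ⁺) e^{-α (s - tₖ)}`. Chaining this bound with the jump condition
`V(tₖ₊₁⁺) ≤ β V(tₖ₊₁)` yields, by induction, `V(tₖ⁺) ≤ V₀ βᵏ e^{-α (tₖ - t₀)}`.
-/

open Filter Topology Set Real

lemma exp_neg_mul_sub_mul_exp_neg_mul_sub (α x y z : ℝ) :
    exp (-α * (x - y)) * exp (-α * (y - z)) = exp (-α * (x - z)) := by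
  rw [← exp_add]; ring_nf

lemma antitoneOn_exp_mul_of_hasDerivAt_le_neg_mul {α : ℝ} {V : ℝ → ℝ} {D : Set ℝ}
    (hD : Convex ℝ D) (hcont : ContinuousOn V D)
    (hderiv : ∀ s ∈ interior D, ∃ d, HasDerivAt V d s ∧ d ≤ -α * V s) :
    AntitoneOn (fun s => exp (α * s) * V s) D := by
  have hexp (s : ℝ) : HasDerivAt (fun x => exp (α * x)) (exp (α * s) * α) s := by
    simpa using ((hasDerivAt_id s).const_mul α).exp
  have hprod : ∀ s ∈ interior D, ∃ d, HasDerivAt (fun x => exp (α * x) * V x)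
      (exp (α * s) * α * V s + exp (α * s) * d) s ∧ d ≤ -α * V s := by
    intro s hs
    obtain ⟨d, hd, hdle⟩ := hderiv s hs
    exact ⟨d, (hexp s).mul hd, hdle⟩
  apply antitoneOn_of_deriv_nonpos hD
  · exact (continuous_exp.comp (continuous_const_mul α)).continuousOn.mul hcont
  · intro s hs
    obtain ⟨d, hd, -⟩ := hprod s hs
    exact hd.differentiableAt.differentiableWithinAt
  · intro s hs
    obtain ⟨d, hd, hdle⟩ := hprod s hs
    rw [hd.deriv, mul_assoc, ← mul_add]
    exact mul_nonpos_of_nonneg_of_nonpos (exp_pos _).le (by linarith)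

lemma continuousOn_Ioc_of_hasDerivAt {V : ℝ → ℝ} {a b : ℝ}
    (hderiv : ∀ s ∈ Ioo a b, ∃ d, HasDerivAt V d s)
    (hleft : ContinuousWithinAt V (Iio b) b) :
    ContinuousOn V (Ioc a b) := by
  intro s hs
  rcases hs.2.lt_or_eq with hsb | rfl
  · obtain ⟨d, hd⟩ := hderiv s ⟨hs.1, hsb⟩
    exact hd.continuousAt.continuousWithinAt
  · exact (continuousWithinAt_Iio_iff_Iic.mp hleft).mono Ioc_subset_Iic_self

lemma AntitoneOn.le_of_tendsto_nhdsGT {g : ℝ → ℝ} {a b L s : ℝ}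
    (hg : AntitoneOn g (Ioc a b)) (hL : Tendsto g (𝓝[>] a) (𝓝 L)) (hs : s ∈ Ioc a b) :
    g s ≤ L := by
  refine ge_of_tendsto hL ?_
  filter_upwards [Ioc_mem_nhdsGT hs.1] with x hx
  exact hg ⟨hx.1, hx.2.trans hs.2⟩ hs hx.2

lemma le_mul_exp_of_hasDerivAt_le_neg_mul {α a b W : ℝ} {V : ℝ → ℝ}
    (hW : Tendsto V (𝓝[>] a) (𝓝 W))
    (hderiv : ∀ s ∈ Ioo a b, ∃ d, HasDerivAt V d s ∧ d ≤ -α * V s)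
    (hleft : ContinuousWithinAt V (Iio b) b) {s : ℝ} (hs : s ∈ Ioc a b) :
    V s ≤ W * exp (-α * (s - a)) := by
  have hcont : ContinuousOn V (Ioc a b) :=
    continuousOn_Ioc_of_hasDerivAt (fun s hs => (hderiv s hs).imp fun _ => And.left) hleft
  have hanti : AntitoneOn (fun s => exp (α * s) * V s) (Ioc a b) :=
    antitoneOn_exp_mul_of_hasDerivAt_le_neg_mul (convex_Ioc a b) hcont
      (by rwa [interior_Ioc])
  have hlim : Tendsto (fun s => exp (α * s) * V s) (𝓝[>] a) (𝓝 (exp (α * a) * W)) :=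
    (((continuous_exp.comp (continuous_const_mul α)).tendsto a).mono_left
      nhdsWithin_le_nhds).mul hW
  have key : exp (α * s) * V s ≤ exp (α * a) * W := hanti.le_of_tendsto_nhdsGT hlim hs
  calc V s = exp (-α * s) * (exp (α * s) * V s) := by
        rw [← mul_assoc, ← exp_add]; simp
    _ ≤ exp (-α * s) * (exp (α * a) * W) := mul_le_mul_of_nonneg_left key (exp_pos _).le
    _ = W * exp (-α * (s - a)) := by
        rw [← mul_assoc, ← exp_add, mul_comm]; ring_nf

lemma le_pow_mul_exp_of_le_mul_exp_sub {α β V₀ : ℝ} (hβ : 0 ≤ β) {t u : ℕ → ℝ}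
    (h0 : u 0 ≤ V₀) (hstep : ∀ k, u (k + 1) ≤ β * (u k * exp (-α * (t (k + 1) - t k))))
    (k : ℕ) : u k ≤ V₀ * β ^ k * exp (-α * (t k - t 0)) := by
  induction k with
  | zero => simpa using h0
  | succ k ih =>
    calc u (k + 1) ≤ β * (u k * exp (-α * (t (k + 1) - t k))) := hstep k
      _ ≤ β * (V₀ * β ^ k * exp (-α * (t k - t 0)) * exp (-α * (t (k + 1) - t k))) := by
          gcongr
      _ = V₀ * β ^ (k + 1) * exp (-α * (t (k + 1) - t 0)) := by
          rw [mul_assoc _ (exp _), mul_comm (exp _), exp_neg_mul_sub_mul_exp_neg_mul_sub]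
          ring

theorem impulsive_lyapunov_exponential_decay_general (α β : ℝ)
    (hβ0 : 0 < β)
    (t : ℕ → ℝ) (hmono : StrictMono t)
    (V : ℝ → ℝ)
    (Vp : ℕ → ℝ) (V₀ : ℝ)
    (hVp : ∀ k : ℕ, Tendsto V (𝓝[>] (t k)) (𝓝 (Vp k)))
    (hderiv : ∀ k : ℕ, ∀ s ∈ Set.Ioo (t k) (t (k + 1)),
      ∃ d : ℝ, HasDerivAt V d s ∧ d ≤ -α * V s)
    (hleft : ∀ k : ℕ, ContinuousWithinAt V (Set.Iio (t (k + 1))) (t (k + 1)))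
    (hjump : ∀ k : ℕ, 1 ≤ k → Vp k ≤ β * V (t k))
    (hinit : Vp 0 ≤ V₀) :
    ∀ k : ℕ, ∀ s ∈ Set.Ioc (t k) (t (k + 1)),
      V s ≤ V₀ * β ^ k * Real.exp (-α * (s - t 0)) := by
  have hdecay (k : ℕ) {s : ℝ} (hs : s ∈ Ioc (t k) (t (k + 1))) :
      V s ≤ Vp k * exp (-α * (s - t k)) :=
    le_mul_exp_of_hasDerivAt_le_neg_mul (hVp k) (hderiv k) (hleft k) hs
  have hreset : ∀ k, Vp k ≤ V₀ * β ^ k * exp (-α * (t k - t 0)) :=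
    le_pow_mul_exp_of_le_mul_exp_sub hβ0.le hinit fun k =>
      (hjump (k + 1) k.succ_pos).trans <|
        mul_le_mul_of_nonneg_left (hdecay k ⟨hmono k.lt_succ_self, le_rfl⟩) hβ0.le
  intro k s hs
  calc V s ≤ Vp k * exp (-α * (s - t k)) := hdecay k hs
    _ ≤ V₀ * β ^ k * exp (-α * (t k - t 0)) * exp (-α * (s - t k)) := by
        gcongr
        exact hreset k
    _ = V₀ * β ^ k * exp (-α * (s - t 0)) := by
        rw [mul_assoc, mul_comm (exp _), exp_neg_mul_sub_mul_exp_neg_mul_sub]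

/-- A nonnegative function `V` which decays at rate `α` between the reset
times `t 0 < t 1 < ⋯` (i.e. `V' ≤ -α V` on each open interval, with left continuity at the
interval right endpoints), contracts by a factor `β ∈ (0,1)` at each reset time (`Vp k` denotes
the right limit of `V` at `t k`), and starts below `V₀` (i.e. `Vp 0 ≤ V₀`), satisfies
`V s ≤ V₀ βᵏ e^{-α (s - t 0)}` for every `k` and every `s ∈ (t k, t (k+1)]`. -/
theorem impulsive_lyapunov_exponential_decay (α β : ℝ) (hα : 0 < α)
    (hβ0 : 0 < β) (hβ1 : β < 1)
    (t : ℕ → ℝ) (hmono : StrictMono t) (hunb : Tendsto t atTop atTop)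
    (V : ℝ → ℝ) (hVnn : ∀ s : ℝ, 0 ≤ V s)
    (Vp : ℕ → ℝ) (V₀ : ℝ)
    (hVp : ∀ k : ℕ, Tendsto V (𝓝[>] (t k)) (𝓝 (Vp k)))
    (hderiv : ∀ k : ℕ, ∀ s ∈ Set.Ioo (t k) (t (k + 1)),
      ∃ d : ℝ, HasDerivAt V d s ∧ d ≤ -α * V s)
    (hleft : ∀ k : ℕ, ContinuousWithinAt V (Set.Iio (t (k + 1))) (t (k + 1)))
    (hjump : ∀ k : ℕ, 1 ≤ k → Vp k ≤ β * V (t k))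
    (hinit : Vp 0 ≤ V₀) :
    ∀ k : ℕ, ∀ s ∈ Set.Ioc (t k) (t (k + 1)),
      V s ≤ V₀ * β ^ k * Real.exp (-α * (s - t 0)) :=
  impulsive_lyapunov_exponential_decay_general α β hβ0 t hmono V Vp V₀ hVp hderiv hleft hjump hinit
end

section
/- Let α > 0 and 0 < β < 1, let t_0 < t_1 < ⋯ < t_k < T, and let V : [t_0, T] → ℝ be a nonnegative function and g : [t_0, T] → ℝ an integrable function such that: (i) V(t_0⁺) = 0 (zero initial condition); (ii) on each interval (t_v, t_{v+1}) (with t_{k+1} := T), V is differentiable and satisfies V'(t) + α V(t) + g(t) < 0, and V is continuous from the left at each t_{v+1}; (iii) at each reset time t_v (1 ≤ v ≤ k), the right limit satisfies V(t_v⁺) ≤ β V(t_v). Then ∫_{t_0}^{T} g(t) dt < 0. -/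
/-! On each interval between resets, `V' + αV + g < 0` integrates to
`∫ g ≤ V(t_v⁺) - V(t_{v+1}) - α ∫ V`. This stays strict without the `α ∫ V` term: either `V` is
positive somewhere, so that `α ∫ V > 0`, or `V` vanishes identically, so that every point is a
minimum of `V`, `V' = 0` and `g < 0`. Summing over the intervals, the resets
`V(t_v⁺) ≤ β V(t_v) ≤ V(t_v)` and `V(t_0⁺) = 0` make the right-hand side telescope to
`-V(T) ≤ 0`. -/

open Filter Topology Set MeasureTheory

theorem continuousOn_Icc_update_of_tendsto {α β : Type*} [TopologicalSpace α] [LinearOrder α]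
    [OrderTopology α] [TopologicalSpace β] [DecidableEq α] {f : α → β} {a b : α} {la : β}
    (hab : a < b) (hf : ContinuousOn f (Ioo a b)) (ha : Tendsto f (𝓝[>] a) (𝓝 la))
    (hb : ContinuousWithinAt f (Iio b) b) :
    ContinuousOn (Function.update f a la) (Icc a b) := by
  rw [continuousOn_update_iff, Icc_sdiff_left]
  refine ⟨fun x hx ↦ ?_, fun _ ↦ ha.mono_left (nhdsWithin_mono _ Ioc_subset_Ioi_self)⟩
  rcases hx.2.lt_or_eq with hxb | rfl
  · exact (hf.continuousAt (Ioo_mem_nhds hx.1 hxb)).continuousWithinAt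
  · exact (continuousWithinAt_Iio_iff_Iic.1 hb).mono Ioc_subset_Iic_self

theorem integral_lt_sub_of_hasDerivAt_add_mul_add_neg {f f' g : ℝ → ℝ} {α a b : ℝ}
    (hα : 0 < α) (hab : a < b) (hf : ContinuousOn f (Icc a b)) (hf0 : ∀ s ∈ Icc a b, 0 ≤ f s)
    (hg : IntervalIntegrable g volume a b) (hf' : ∀ s ∈ Ioo a b, HasDerivAt f (f' s) s)
    (hlt : ∀ s ∈ Ioo a b, f' s + α * f s + g s < 0) :
    ∫ s in a..b, g s < f a - f b := by
  have hfint : IntervalIntegrable f volume a b := hf.intervalIntegrable_of_Icc hab.le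
  have hFTC : f b - f a ≤ ∫ s in a..b, (-g s - α * f s) :=
    intervalIntegral.sub_le_integral_of_hasDeriv_right_of_le hab.le hf
      (fun s hs ↦ (hf' s hs).hasDerivWithinAt)
      ((intervalIntegrable_iff_integrableOn_Icc_of_le hab.le).1 (hg.neg.sub (hfint.const_mul α)))
      fun s hs ↦ by linarith [hlt s hs]
  have hsplit := intervalIntegral.integral_sub hg.neg (hfint.const_mul α)
  simp only [Pi.neg_apply, intervalIntegral.integral_neg, intervalIntegral.integral_const_mul]
    at hsplit
  rw [hsplit] at hFTC
  by_cases hpos : ∃ c ∈ Icc a b, 0 < f c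
  · have hf_int_pos := intervalIntegral.integral_pos hab hf (fun s hs ↦ hf0 s (Ioc_subset_Icc_self hs)) hpos
    nlinarith
  push Not at hpos
  have hf_zero : ∀ s ∈ Icc a b, f s = 0 := fun s hs ↦ (hpos s hs).antisymm (hf0 s hs)
  have hg_neg : ∀ s ∈ Ioo a b, g s < 0 := by
    intro s hs
    have hmin : IsLocalMin f s := eventually_of_mem (Ioo_mem_nhds hs.1 hs.2) fun y hy ↦
      (hf_zero s (Ioo_subset_Icc_self hs)).symm ▸ hf0 y (Ioo_subset_Icc_self hy)
    have := hlt s hs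
    rw [hf_zero s (Ioo_subset_Icc_self hs), hmin.hasDerivAt_eq_zero (hf' s hs)] at this
    linarith
  have hg_int_neg := intervalIntegral.intervalIntegral_pos_of_pos_on hg.neg
    (fun s hs ↦ neg_pos.2 (hg_neg s hs)) hab
  simp only [Pi.neg_apply, intervalIntegral.integral_neg, neg_pos] at hg_int_neg
  rw [hf_zero a (left_mem_Icc.2 hab.le), hf_zero b (right_mem_Icc.2 hab.le)]
  linarith

theorem integral_lt_sub_of_hasDerivAt_add_mul_add_neg_of_tendsto {V V' g : ℝ → ℝ}
    {α a b Va : ℝ} (hα : 0 < α) (hab : a < b) (hV0 : ∀ s ∈ Ioc a b, 0 ≤ V s)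
    (hg : IntervalIntegrable g volume a b) (hVa : Tendsto V (𝓝[>] a) (𝓝 Va))
    (hVb : ContinuousWithinAt V (Iio b) b) (hV' : ∀ s ∈ Ioo a b, HasDerivAt V (V' s) s)
    (hlt : ∀ s ∈ Ioo a b, V' s + α * V s + g s < 0) :
    ∫ s in a..b, g s < Va - V b := by
  classical
  obtain ⟨W, hW⟩ : ∃ W, W = Function.update V a Va := ⟨_, rfl⟩
  have hWa : W a = Va := by rw [hW]; exact Function.update_self ..
  have hWV : ∀ s ∈ Ioc a b, W s = V s := fun s hs ↦ hW ▸ Function.update_of_ne hs.1.ne' ..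
  have hWcont : ContinuousOn W (Icc a b) := hW ▸ continuousOn_Icc_update_of_tendsto hab
    (fun s hs ↦ (hV' s hs).continuousAt.continuousWithinAt) hVa hVb
  have hW0 : ∀ s ∈ Icc a b, 0 ≤ W s := by
    intro s hs
    rcases hs.1.eq_or_lt with rfl | has
    · exact hWa ▸ ge_of_tendsto hVa (eventually_of_mem (Ioc_mem_nhdsGT hab) hV0)
    · exact hWV s ⟨has, hs.2⟩ ▸ hV0 s ⟨has, hs.2⟩
  have hW' : ∀ s ∈ Ioo a b, HasDerivAt W (V' s) s := fun s hs ↦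
    (hV' s hs).congr_of_eventuallyEq <| eventually_of_mem (Ioo_mem_nhds hs.1 hs.2) fun y hy ↦
      hWV y (Ioo_subset_Ioc_self hy)
  have := integral_lt_sub_of_hasDerivAt_add_mul_add_neg hα hab hWcont hW0 hg hW'
    fun s hs ↦ hWV s (Ioo_subset_Ioc_self hs) ▸ hlt s hs
  rwa [hWa, hWV b ⟨hab, le_rfl⟩] at this

theorem Finset.sum_range_sub_succ_le_neg {M : Type*} [AddCommGroup M] [PartialOrder M]
    [IsOrderedAddMonoid M] {x y : ℕ → M} {k : ℕ} (h0 : x 0 ≤ 0)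
    (hxy : ∀ v, 1 ≤ v → v ≤ k → x v ≤ y v) :
    ∑ v ∈ range (k + 1), (x v - y (v + 1)) ≤ -y (k + 1) := by
  induction k with
  | zero => simpa using h0
  | succ k ih =>
    rw [sum_range_succ]
    refine (add_le_add (ih fun v h1 hv ↦ hxy v h1 (by omega))
      (sub_le_sub_right (hxy (k + 1) (by omega) le_rfl) (y (k + 1 + 1)))).trans_eq ?_
    abel

theorem performance_index_negative_general (α β : ℝ) (hα : 0 < α) (hβ1 : β < 1)
    (k : ℕ) (t : ℕ → ℝ) (T : ℝ)
    (hmono : ∀ v : ℕ, v ≤ k → t v < t (v + 1))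
    (hT : t (k + 1) = T)
    (V g : ℝ → ℝ) (hVnn : ∀ s : ℝ, 0 ≤ V s)
    (hg : IntervalIntegrable g MeasureTheory.volume (t 0) T)
    (Vp : ℕ → ℝ)
    (hVp : ∀ v : ℕ, v ≤ k → Tendsto V (𝓝[>] (t v)) (𝓝 (Vp v)))
    (hVp0 : Vp 0 = 0)
    (hderiv : ∀ v : ℕ, v ≤ k → ∀ s ∈ Set.Ioo (t v) (t (v + 1)),
      ∃ d : ℝ, HasDerivAt V d s ∧ d + α * V s + g s < 0)
    (hleft : ∀ v : ℕ, v ≤ k → ContinuousWithinAt V (Set.Iio (t (v + 1))) (t (v + 1)))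
    (hjump : ∀ v : ℕ, 1 ≤ v → v ≤ k → Vp v ≤ β * V (t v)) :
    ∫ s in (t 0)..T, g s < 0 := by
  subst hT
  have ht : MonotoneOn t (Iic (k + 1)) := (strictMonoOn_of_lt_add_one ordConnected_Iic
    fun v _ _ hv ↦ hmono v (by simpa using hv)).monotoneOn
  have ht_mono {u v : ℕ} (huv : u ≤ v) (hv : v ≤ k + 1) : t u ≤ t v :=
    ht (mem_Iic.2 (huv.trans hv)) (mem_Iic.2 hv) huv
  have hint : ∀ v ≤ k, IntervalIntegrable g volume (t v) (t (v + 1)) := fun v hv ↦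
    hg.mono_set <| by
      rw [uIcc_of_le (hmono v hv).le, uIcc_of_le (ht_mono (Nat.zero_le _) le_rfl)]
      exact Icc_subset_Icc (ht_mono (Nat.zero_le v) (by omega)) (ht_mono (by omega) le_rfl)
  have hVp_le : ∀ v, 1 ≤ v → v ≤ k → Vp v ≤ V (t v) := fun v h1 hv ↦
    (hjump v h1 hv).trans (mul_le_of_le_one_left (hVnn _) hβ1.le)
  calc ∫ s in t 0..t (k + 1), g s = ∑ v ∈ Finset.range (k + 1), ∫ s in t v..t (v + 1), g s :=
        (intervalIntegral.sum_integral_adjacent_intervals fun v hv ↦ hint v (by omega)).symm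
    _ < ∑ v ∈ Finset.range (k + 1), (Vp v - V (t (v + 1))) := by
        refine Finset.sum_lt_sum_of_nonempty Finset.nonempty_range_add_one fun v hv ↦ ?_
        have hv : v ≤ k := by simpa [Nat.lt_succ_iff] using hv
        choose! V' hV' hlt using hderiv v hv
        exact integral_lt_sub_of_hasDerivAt_add_mul_add_neg_of_tendsto hα (hmono v hv)
          (fun s _ ↦ hVnn s) (hint v hv) (hVp v hv) (hleft v hv) hV' hlt
    _ ≤ -V (t (k + 1)) := Finset.sum_range_sub_succ_le_neg hVp0.le hVp_le
    _ ≤ 0 := neg_nonpos.2 (hVnn _)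

/-- Let `V ≥ 0` with zero initial condition (right limit `Vp 0 = 0` at `t 0`)
satisfy `V' + α V + g < 0` on each interval `(t v, t (v+1))` (for `v ≤ k`, where
`t (k+1) = T`), with left continuity at the right endpoints, and contract by a factor
`β ∈ (0,1)` at each reset time `t v`, `1 ≤ v ≤ k` (`Vp v` denotes the right limit of `V` at
`t v`).  Then `∫_{t 0}^{T} g < 0`. -/
theorem performance_index_negative (α β : ℝ) (hα : 0 < α) (hβ0 : 0 < β) (hβ1 : β < 1)
    (k : ℕ) (t : ℕ → ℝ) (T : ℝ)
    (hmono : ∀ v : ℕ, v ≤ k → t v < t (v + 1))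
    (hT : t (k + 1) = T)
    (V g : ℝ → ℝ) (hVnn : ∀ s : ℝ, 0 ≤ V s)
    (hg : IntervalIntegrable g MeasureTheory.volume (t 0) T)
    (Vp : ℕ → ℝ)
    (hVp : ∀ v : ℕ, v ≤ k → Tendsto V (𝓝[>] (t v)) (𝓝 (Vp v)))
    (hVp0 : Vp 0 = 0)
    (hderiv : ∀ v : ℕ, v ≤ k → ∀ s ∈ Set.Ioo (t v) (t (v + 1)),
      ∃ d : ℝ, HasDerivAt V d s ∧ d + α * V s + g s < 0)
    (hleft : ∀ v : ℕ, v ≤ k → ContinuousWithinAt V (Set.Iio (t (v + 1))) (t (v + 1)))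
    (hjump : ∀ v : ℕ, 1 ≤ v → v ≤ k → Vp v ≤ β * V (t v)) :
    ∫ s in (t 0)..T, g s < 0 :=
  performance_index_negative_general α β hα hβ1 k t T hmono hT V g hVnn hg Vp hVp hVp0 hderiv hleft
    hjump
end

section
/- (Theorem 2, part 2) Let L, P_e ∈ ℝ^{N×N}, let P be an N×N symmetric positive definite matrix, and let α > 0, ρ > 0, 0 < β < 1 satisfy the two negative-definiteness conditions: [[-P L - Lᵀ P + α P, P], [Pᵀ, -ρ² I_N]] ≺ 0 and [[-β P, P_eᵀ], [P_e, -P⁻¹]] ≺ 0. Let t_0 < t_1 < t_2 < ⋯ be reset times with average impulsive interval T̄ and chatter bound N_0, meaning that the number k of reset times in (t_0, t] satisfies k ≥ (t - t_0)/T̄ - N_0 for all t > t_0, and suppose α > (ln β)/T̄. Let ψ : ℝ → ℝ^N satisfy ψ'(t) = -L ψ(t) on each interval (t_k, t_{k+1}) (left-continuous at interval right endpoints) and ψ(t_k⁺) = P_e ψ(t_k) at each reset time. Then V(t) = ψ(t)ᵀ P ψ(t) satisfies V(t) ≤ V(t_0⁺) · β^{-N_0} · e^{-(α - (ln β)/T̄)(t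 - t_0)} for all t > t_0; in particular ψ(t) → 0 exponentially with convergence rate η = α - (ln β)/T̄. -/
/-!
Testing the first LMI on vectors `(y, 0)` shows that `V = ψᵀ P ψ` decays at rate `α` along
`ψ' = -L ψ`, so `V(s) ≤ V(t_m⁺) e^{-α (s - t_m)}` on each `(t_m, t_{m+1}]`; testing the second on
`(y, P Pe y)` gives `V(t_m⁺) ≤ β V(t_m)` at every reset. Chaining the intervals,
`V(s) ≤ V(t_0⁺) β^m e^{-α (s - t_0)}` for `s ∈ (t_m, t_{m+1}]`, and since `β ≤ 1` the chatter bound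
`m ≥ (s - t_0)/T̄ - N₀` turns `β^m` into at most `β^{-N₀} e^{(ln β / T̄)(s - t_0)}`.
-/

open Matrix Filter Topology Set Real

section BlockForms

variable {m n R : Type*} [Fintype m] [Fintype n]

lemma dotProduct_mulVec_nonpos_of_neg [NonUnitalNonAssocSemiring R] [Preorder R]
    {M : Matrix n n R} (hM : ∀ x : n → R, x ≠ 0 → x ⬝ᵥ M *ᵥ x < 0) (x : n → R) :
    x ⬝ᵥ M *ᵥ x ≤ 0 := by
  rcases eq_or_ne x 0 with rfl | hx
  · simp
  · exact (hM x hx).le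

lemma sumElim_dotProduct_fromBlocks_mulVec_sumElim [NonUnitalNonAssocSemiring R]
    (A : Matrix m m R) (B : Matrix m n R) (C : Matrix n m R) (D : Matrix n n R)
    (y : m → R) (z : n → R) :
    Sum.elim y z ⬝ᵥ fromBlocks A B C D *ᵥ Sum.elim y z =
      y ⬝ᵥ A *ᵥ y + y ⬝ᵥ B *ᵥ z + (z ⬝ᵥ C *ᵥ y + z ⬝ᵥ D *ᵥ z) := by
  simp only [fromBlocks_mulVec, Sum.elim_comp_inl, Sum.elim_comp_inr,
    sumElim_dotProduct_sumElim, dotProduct_add]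

lemma isUnit_of_dotProduct_mulVec_pos [Field R] [Preorder R] [DecidableEq n]
    {P : Matrix n n R} (hP : ∀ x : n → R, x ≠ 0 → 0 < x ⬝ᵥ P *ᵥ x) : IsUnit P := by
  rw [← mulVec_injective_iff_isUnit]
  intro x y hxy
  by_contra hne
  have := hP (x - y) (sub_ne_zero.2 hne)
  rw [mulVec_sub, hxy, sub_self, dotProduct_zero] at this
  exact this.false

variable [CommRing R] [LinearOrder R] [IsStrictOrderedRing R]

lemma flow_derivative_le_of_lmi {P L : Matrix n n R} {B C D : Matrix n n R} {α : R}
    (hLMI : ∀ x : n ⊕ n → R, x ≠ 0 →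
      x ⬝ᵥ fromBlocks (-(P * L) - Lᵀ * P + α • P) B C D *ᵥ x < 0) (y : n → R) :
    -(L *ᵥ y) ⬝ᵥ P *ᵥ y + y ⬝ᵥ P *ᵥ -(L *ᵥ y) ≤ -α * (y ⬝ᵥ P *ᵥ y) := by
  have h := dotProduct_mulVec_nonpos_of_neg hLMI (Sum.elim y 0)
  rw [sumElim_dotProduct_fromBlocks_mulVec_sumElim] at h
  have hL : L *ᵥ y ⬝ᵥ P *ᵥ y = y ⬝ᵥ (Lᵀ * P) *ᵥ y := by
    rw [← mulVec_mulVec, dotProduct_mulVec y, vecMul_transpose]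
  simp only [zero_dotProduct, mulVec_zero, dotProduct_zero, add_zero, sub_mulVec, add_mulVec,
    neg_mulVec, smul_mulVec, dotProduct_sub, dotProduct_add, dotProduct_neg, dotProduct_smul,
    smul_eq_mul, ← mulVec_mulVec] at h
  simp only [mulVec_neg, neg_dotProduct, dotProduct_neg, hL, ← mulVec_mulVec]
  linarith

/-- On the test vector `(y, P Pe y)` the block `-P⁻¹` contributes `-(Pe y)ᵀ P (Pe y)`. -/
lemma jump_le_of_lmi [DecidableEq n] {P Pe : Matrix n n R} {β : R} (hP : IsUnit P)
    (hLMI : ∀ x : n ⊕ n → R, x ≠ 0 →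
      x ⬝ᵥ fromBlocks (-β • P) Peᵀ Pe (-P⁻¹) *ᵥ x < 0) (y : n → R) :
    Pe *ᵥ y ⬝ᵥ P *ᵥ (Pe *ᵥ y) ≤ β * (y ⬝ᵥ P *ᵥ y) := by
  have h := dotProduct_mulVec_nonpos_of_neg hLMI (Sum.elim y (P *ᵥ Pe *ᵥ y))
  rw [sumElim_dotProduct_fromBlocks_mulVec_sumElim] at h
  have hinv : P⁻¹ *ᵥ P *ᵥ Pe *ᵥ y = Pe *ᵥ y := by
    rw [mulVec_mulVec, nonsing_inv_mul P ((isUnit_iff_isUnit_det P).1 hP), one_mulVec]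
  have hPe : y ⬝ᵥ Peᵀ *ᵥ P *ᵥ Pe *ᵥ y = Pe *ᵥ y ⬝ᵥ P *ᵥ Pe *ᵥ y := by
    rw [dotProduct_mulVec, vecMul_transpose]
  simp only [neg_mulVec, smul_mulVec, dotProduct_neg, dotProduct_smul, smul_eq_mul, hinv,
    hPe, dotProduct_comm (P *ᵥ Pe *ᵥ y) (Pe *ᵥ y)] at h
  linarith

end BlockForms

section Calculus

variable {𝕜 : Type*} [NontriviallyNormedField 𝕜] {m n : Type*} [Fintype n]
  {f g : 𝕜 → n → 𝕜} {f' g' : n → 𝕜} {s : 𝕜}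

theorem HasDerivAt.dotProduct (hf : HasDerivAt f f' s) (hg : HasDerivAt g g' s) :
    HasDerivAt (fun u => f u ⬝ᵥ g u) (f' ⬝ᵥ g s + f s ⬝ᵥ g') s := by
  have h : HasDerivAt (fun u => ∑ i, f u i * g u i) (∑ i, (f' i * g s i + f s i * g' i)) s :=
    HasDerivAt.fun_sum fun i _ => (hasDerivAt_pi.1 hf i).fun_mul (hasDerivAt_pi.1 hg i)
  exact h.congr_deriv (Finset.sum_add_distrib.trans rfl)

theorem HasDerivAt.matrix_mulVec (P : Matrix m n 𝕜) (hf : HasDerivAt f f' s) :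
    HasDerivAt (fun u => P *ᵥ f u) (P *ᵥ f') s :=
  hasDerivAt_pi.2 fun i => by
    simpa [mulVec] using (hasDerivAt_const s (P i)).dotProduct hf

end Calculus

/-- `V u e^{α u}` is antitone on `(a, b]`, and tends to `v e^{α a}` as `u → a⁺`. -/
lemma le_mul_exp_of_hasDerivAt_le {V V' : ℝ → ℝ} {a b α v : ℝ}
    (hlim : Tendsto V (𝓝[>] a) (𝓝 v)) (hd : ∀ u ∈ Ioo a b, HasDerivAt V (V' u) u)
    (hV' : ∀ u ∈ Ioo a b, V' u ≤ -α * V u) (hb : ContinuousWithinAt V (Iio b) b)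
    {s : ℝ} (hs : s ∈ Ioc a b) : V s ≤ v * exp (-α * (s - a)) := by
  set g : ℝ → ℝ := fun u => V u * exp (α * u)
  have hg : ∀ u ∈ Ioo a b, HasDerivAt g ((V' u + α * V u) * exp (α * u)) u := fun u hu =>
    ((hd u hu).fun_mul ((hasDerivAt_id' u).const_mul α).exp).congr_deriv (by ring)
  have hcont : ContinuousOn g (Ioc a b) := by
    intro u hu
    rcases hu.2.eq_or_lt with rfl | hlt
    · exact ((continuousWithinAt_Iio_iff_Iic.1 hb).mono Ioc_subset_Iic_self).mul
        (by fun_prop : Continuous fun u => exp (α * u)).continuousWithinAt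
    · exact (hg u ⟨hu.1, hlt⟩).continuousAt.continuousWithinAt
  have hanti : AntitoneOn g (Ioc a b) := by
    refine antitoneOn_of_deriv_nonpos (convex_Ioc a b) hcont ?_ ?_ <;> rw [interior_Ioc]
    · exact fun u hu => (hg u hu).differentiableAt.differentiableWithinAt
    · intro u hu
      rw [(hg u hu).deriv]
      exact mul_nonpos_of_nonpos_of_nonneg (by linarith [hV' u hu]) (exp_pos _).le
  have hglim : Tendsto g (𝓝[>] a) (𝓝 (v * exp (α * a))) :=
    hlim.mul ((by fun_prop : Continuous fun u => exp (α * u)).tendsto a |>.mono_left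
      nhdsWithin_le_nhds)
  have hgs : g s ≤ v * exp (α * a) := ge_of_tendsto hglim <| by
    filter_upwards [Ioo_mem_nhdsGT hs.1] with u hu
    exact hanti ⟨hu.1, hu.2.le.trans hs.2⟩ hs hu.2.le
  calc V s = g s * exp (-α * s) := by
        simp only [g, mul_assoc, ← exp_add, show α * s + -α * s = 0 by ring, exp_zero, mul_one]
    _ ≤ v * exp (α * a) * exp (-α * s) := by gcongr
    _ = v * exp (-α * (s - a)) := by rw [mul_assoc, ← exp_add]; ring_nf

lemma dotProduct_mulVec_le_mul_exp_of_linear_flow {n : Type*} [Fintype n]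
    {P L : Matrix n n ℝ} {α : ℝ}
    (hdecay : ∀ y : n → ℝ, -(L *ᵥ y) ⬝ᵥ P *ᵥ y + y ⬝ᵥ P *ᵥ -(L *ᵥ y) ≤ -α * (y ⬝ᵥ P *ᵥ y))
    {ψ : ℝ → n → ℝ} {a b : ℝ} {v : n → ℝ} (hlim : Tendsto ψ (𝓝[>] a) (𝓝 v))
    (hd : ∀ u ∈ Ioo a b, HasDerivAt ψ (-(L *ᵥ ψ u)) u)
    (hb : ContinuousWithinAt ψ (Iio b) b) {s : ℝ} (hs : s ∈ Ioc a b) :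
    ψ s ⬝ᵥ P *ᵥ ψ s ≤ (v ⬝ᵥ P *ᵥ v) * exp (-α * (s - a)) := by
  have hV : Continuous fun y : n → ℝ => y ⬝ᵥ P *ᵥ y :=
    continuous_id.dotProduct (continuous_const.matrix_mulVec continuous_id)
  exact le_mul_exp_of_hasDerivAt_le ((hV.tendsto v).comp hlim)
    (fun u hu => (hd u hu).dotProduct ((hd u hu).matrix_mulVec P)) (fun u _ => hdecay (ψ u))
    (hV.continuousAt.comp_continuousWithinAt hb) hs

lemma le_pow_mul_exp_of_flow_of_jump {t : ℕ → ℝ} (ht : StrictMono t) {V : ℝ → ℝ}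
    {Vp : ℕ → ℝ} {α β : ℝ} (hβ : 0 ≤ β)
    (hflow : ∀ m, ∀ s ∈ Ioc (t m) (t (m + 1)), V s ≤ Vp m * exp (-α * (s - t m)))
    (hjump : ∀ m, Vp (m + 1) ≤ β * V (t (m + 1))) :
    ∀ m, ∀ s ∈ Ioc (t m) (t (m + 1)), V s ≤ Vp 0 * β ^ m * exp (-α * (s - t 0)) := by
  intro m
  induction m with
  | zero => simpa using hflow 0
  | succ m ih =>
    intro s hs
    have hreset : Vp (m + 1) ≤ β * (Vp 0 * β ^ m * exp (-α * (t (m + 1) - t 0))) :=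
      (hjump m).trans <| mul_le_mul_of_nonneg_left
        (ih _ ⟨ht (Nat.lt_succ_self m), le_rfl⟩) hβ
    calc V s ≤ Vp (m + 1) * exp (-α * (s - t (m + 1))) := hflow (m + 1) s hs
      _ ≤ β * (Vp 0 * β ^ m * exp (-α * (t (m + 1) - t 0))) * exp (-α * (s - t (m + 1))) := by
          gcongr
      _ = Vp 0 * β ^ (m + 1) * (exp (-α * (t (m + 1) - t 0)) * exp (-α * (s - t (m + 1)))) := by
          ring
      _ = Vp 0 * β ^ (m + 1) * exp (-α * (s - t 0)) := by
          rw [← exp_add]; ring_nf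

lemma pow_mul_exp_le_of_le_natCast {α β T τ : ℝ} {m N₀ : ℕ} (hβ0 : 0 < β) (hβ1 : β ≤ 1)
    (hm : τ / T - N₀ ≤ m) :
    β ^ m * exp (-α * τ) ≤ (β ^ N₀)⁻¹ * exp (-(α - log β / T) * τ) := by
  have hlog : m * log β ≤ (τ / T - N₀) * log β :=
    mul_le_mul_of_nonpos_right hm (log_nonpos hβ0.le hβ1)
  have hpow (k : ℕ) : β ^ k = exp (k * log β) := by rw [exp_nat_mul, exp_log hβ0]
  rw [hpow, hpow, ← exp_neg, ← exp_add, ← exp_add, exp_le_exp]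
  linarith [show (τ / T - N₀) * log β = log β / T * τ - N₀ * log β by ring]

theorem Monotone.exists_mem_Ioc_succ_of_tendsto_atTop {β : Type*} [LinearOrder β]
    [NoMaxOrder β] {t : ℕ → β} (ht : Monotone t) (htop : Tendsto t atTop atTop) {s : β}
    (hs : t 0 < s) : ∃ m, s ∈ Ioc (t m) (t (m + 1)) := by
  have h := iUnion_Ioc_map_succ_eq_Ioi (fun m => ht (Nat.zero_le m))
    (not_bddAbove_of_tendsto_atTop htop)
  have hs' : s ∈ ⋃ m : ℕ, Ioc (t m) (t (Order.succ m)) := by rw [h]; exact hs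
  simpa using hs'

theorem clustered_network_exponential_stability_general (N : ℕ) (L Pe P : Matrix (Fin N) (Fin N) ℝ)
    (hPpd : ∀ x : Fin N → ℝ, x ≠ 0 → 0 < x ⬝ᵥ P.mulVec x)
    (α ρ β : ℝ) (hβ0 : 0 < β) (hβ1 : β < 1)
    (hLMI1 : ∀ x : Fin N ⊕ Fin N → ℝ, x ≠ 0 →
      x ⬝ᵥ (Matrix.fromBlocks (-(P * L) - Lᵀ * P + α • P) P Pᵀ
        (-(ρ ^ 2) • (1 : Matrix (Fin N) (Fin N) ℝ))).mulVec x < 0)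
    (hLMI2 : ∀ x : Fin N ⊕ Fin N → ℝ, x ≠ 0 →
      x ⬝ᵥ (Matrix.fromBlocks (-β • P) Peᵀ Pe (-P⁻¹)).mulVec x < 0)
    (t : ℕ → ℝ) (hmono : StrictMono t) (hunb : Tendsto t atTop atTop)
    (Tbar : ℝ) (N₀ : ℕ)
    (hcount : ∀ m : ℕ, ∀ s ∈ Set.Ioc (t m) (t (m + 1)),
      (s - t 0) / Tbar - (N₀ : ℝ) ≤ (m : ℝ))
    (ψ : ℝ → Fin N → ℝ) (ψp : ℕ → Fin N → ℝ)
    (hψp : ∀ m : ℕ, Tendsto ψ (𝓝[>] (t m)) (𝓝 (ψp m)))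
    (hderiv : ∀ m : ℕ, ∀ s ∈ Set.Ioo (t m) (t (m + 1)),
      HasDerivAt ψ (-(L.mulVec (ψ s))) s)
    (hleft : ∀ m : ℕ, ContinuousWithinAt ψ (Set.Iio (t (m + 1))) (t (m + 1)))
    (hjump : ∀ m : ℕ, 1 ≤ m → ψp m = Pe.mulVec (ψ (t m))) :
    ∀ s : ℝ, t 0 < s →
      ψ s ⬝ᵥ P.mulVec (ψ s) ≤
        (ψp 0 ⬝ᵥ P.mulVec (ψp 0)) * (β ^ N₀)⁻¹ *
          Real.exp (-(α - Real.log β / Tbar) * (s - t 0)) := by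
  have hflow : ∀ m, ∀ s ∈ Ioc (t m) (t (m + 1)),
      ψ s ⬝ᵥ P *ᵥ ψ s ≤ (ψp m ⬝ᵥ P *ᵥ ψp m) * exp (-α * (s - t m)) := fun m _ hs =>
    dotProduct_mulVec_le_mul_exp_of_linear_flow (flow_derivative_le_of_lmi hLMI1) (hψp m)
      (hderiv m) (hleft m) hs
  have hreset : ∀ m, ψp (m + 1) ⬝ᵥ P *ᵥ ψp (m + 1) ≤ β * (ψ (t (m + 1)) ⬝ᵥ P *ᵥ ψ (t (m + 1))) :=
    fun m => by
      rw [hjump (m + 1) m.succ_pos]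
      exact jump_le_of_lmi (isUnit_of_dotProduct_mulVec_pos hPpd) hLMI2 _
  have hV0 : 0 ≤ ψp 0 ⬝ᵥ P *ᵥ ψp 0 := by
    rcases eq_or_ne (ψp 0) 0 with h | h
    · simp [h]
    · exact (hPpd _ h).le
  intro s hs
  obtain ⟨m, hm⟩ := hmono.monotone.exists_mem_Ioc_succ_of_tendsto_atTop hunb hs
  calc ψ s ⬝ᵥ P *ᵥ ψ s ≤ (ψp 0 ⬝ᵥ P *ᵥ ψp 0) * β ^ m * exp (-α * (s - t 0)) :=
        le_pow_mul_exp_of_flow_of_jump hmono hβ0.le hflow hreset m s hm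
    _ ≤ (ψp 0 ⬝ᵥ P *ᵥ ψp 0) * (β ^ N₀)⁻¹ * exp (-(α - log β / Tbar) * (s - t 0)) := by
        rw [mul_assoc, mul_assoc]
        exact mul_le_mul_of_nonneg_left
          (pow_mul_exp_le_of_le_natCast hβ0 hβ1.le (hcount m s hm)) hV0

/-- **Theorem 2, part 2: exponential stability without disturbance.** Suppose the
two LMIs `[[-PL - LᵀP + αP, P], [Pᵀ, -ρ² I]] ≺ 0` and `[[-βP, Peᵀ], [Pe, -P⁻¹]] ≺ 0` hold for
a symmetric positive definite `P`, `α, ρ > 0`, `0 < β < 1`.  Let the reset times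
`t 0 < t 1 < ⋯` have average impulsive interval `Tbar` and chatter bound `N₀` (the number `m` of
reset times in `(t 0, s]` satisfies `m ≥ (s - t 0)/Tbar - N₀`), with `α > ln β / Tbar`.  If `ψ`
solves `ψ' = -L ψ` between resets with jumps `ψ(t_m⁺) = Pe ψ(t_m)`, then the Lyapunov function
`V(s) = ψ(s)ᵀ P ψ(s)` satisfies `V(s) ≤ V(t 0⁺) β^{-N₀} e^{-(α - ln β / Tbar)(s - t 0)}` for all
`s > t 0`. -/
theorem clustered_network_exponential_stability (N : ℕ) (L Pe P : Matrix (Fin N) (Fin N) ℝ)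
    (hPsymm : P.IsSymm)
    (hPpd : ∀ x : Fin N → ℝ, x ≠ 0 → 0 < x ⬝ᵥ P.mulVec x)
    (α ρ β : ℝ) (hα : 0 < α) (hρ : 0 < ρ) (hβ0 : 0 < β) (hβ1 : β < 1)
    (hLMI1 : ∀ x : Fin N ⊕ Fin N → ℝ, x ≠ 0 →
      x ⬝ᵥ (Matrix.fromBlocks (-(P * L) - Lᵀ * P + α • P) P Pᵀ
        (-(ρ ^ 2) • (1 : Matrix (Fin N) (Fin N) ℝ))).mulVec x < 0)
    (hLMI2 : ∀ x : Fin N ⊕ Fin N → ℝ, x ≠ 0 →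
      x ⬝ᵥ (Matrix.fromBlocks (-β • P) Peᵀ Pe (-P⁻¹)).mulVec x < 0)
    (t : ℕ → ℝ) (hmono : StrictMono t) (hunb : Tendsto t atTop atTop)
    (Tbar : ℝ) (hTbar : 0 < Tbar) (N₀ : ℕ)
    (hcount : ∀ m : ℕ, ∀ s ∈ Set.Ioc (t m) (t (m + 1)),
      (s - t 0) / Tbar - (N₀ : ℝ) ≤ (m : ℝ))
    (hrate : Real.log β / Tbar < α)
    (ψ : ℝ → Fin N → ℝ) (ψp : ℕ → Fin N → ℝ)
    (hψp : ∀ m : ℕ, Tendsto ψ (𝓝[>] (t m)) (𝓝 (ψp m)))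
    (hderiv : ∀ m : ℕ, ∀ s ∈ Set.Ioo (t m) (t (m + 1)),
      HasDerivAt ψ (-(L.mulVec (ψ s))) s)
    (hleft : ∀ m : ℕ, ContinuousWithinAt ψ (Set.Iio (t (m + 1))) (t (m + 1)))
    (hjump : ∀ m : ℕ, 1 ≤ m → ψp m = Pe.mulVec (ψ (t m))) :
    ∀ s : ℝ, t 0 < s →
      ψ s ⬝ᵥ P.mulVec (ψ s) ≤
        (ψp 0 ⬝ᵥ P.mulVec (ψp 0)) * (β ^ N₀)⁻¹ *
          Real.exp (-(α - Real.log β / Tbar) * (s - t 0)) :=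
  clustered_network_exponential_stability_general N L Pe P hPpd α ρ β hβ0 hβ1 hLMI1 hLMI2 t hmono
    hunb Tbar N₀ hcount ψ ψp hψp hderiv hleft hjump
end

section
/- Let L be an N×N Laplacian matrix whose associated directed graph contains a directed spanning tree. Then 0 is an algebraically simple eigenvalue of L (i.e., 0 is a root of multiplicity exactly 1 of the characteristic polynomial of L), the all-ones vector 1_N is an eigenvector of L for the eigenvalue 0, and every other complex eigenvalue μ of L satisfies Re(μ) > 0 (equivalently, every nonzero eigenvalue of -L has negative real part). -/
/-!
By Gershgorin's theorem every eigenvalue of a Laplacian `L` lies in a disc centred at some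
`L i i ≥ 0` with radius `L i i`, which meets the imaginary axis only at `0`.

For the multiplicity of `0`, a maximum principle: at a maximum of a real vector `v` every row of
`L *ᵥ v` is nonnegative, and if it vanishes the maximum is also attained at every in-neighbour.
So an `L`-harmonic vector attains its maximum (and its minimum) at the root and is constant, while
a constant `c` in the range of `L` satisfies `0 ≤ c` and `0 ≤ -c`. Hence
`ker L² = ker L = span {1}` over `ℂ`, and the generalised eigenspace of `0` is a line.
-/

open Matrix Finset Module.End

namespace Module.End

variable {K V : Type*} [Field K] [AddCommGroup V] [Module K V]

lemma maxGenEigenspace_zero_eq_ker {f : End K V}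
    (h : LinearMap.ker (f ^ 2) ≤ LinearMap.ker f) :
    f.maxGenEigenspace 0 = LinearMap.ker f := by
  have hstable : LinearMap.ker (f ^ 1) = LinearMap.ker (f ^ (1 + 1)) :=
    le_antisymm (LinearMap.ker_le_ker_comp _ _) (by simpa using h)
  ext x
  simp only [mem_maxGenEigenspace, zero_smul, sub_zero, LinearMap.mem_ker]
  refine ⟨fun ⟨k, hk⟩ => ?_, fun hx => ⟨1, by simpa using hx⟩⟩
  rcases k with _ | k
  · simp_all
  · have hk' : x ∈ LinearMap.ker (f ^ (1 + k)) := by simpa [add_comm] using hk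
    simpa using (ker_pow_constant hstable k).ge hk'

end Module.End

lemma Complex.re_pos_of_mem_closedBall_ofReal {d : ℝ} {μ : ℂ}
    (hμ : μ ∈ Metric.closedBall (d : ℂ) d) (h0 : μ ≠ 0) : 0 < μ.re := by
  have hd : 0 ≤ d := Metric.nonempty_closedBall.mp ⟨μ, hμ⟩
  rw [Metric.mem_closedBall, dist_eq_norm, ← sq_le_sq₀ (norm_nonneg _) hd, Complex.sq_norm,
    Complex.normSq_apply] at hμ
  have hpos := Complex.normSq_pos.mpr h0
  rw [Complex.normSq_apply] at hpos
  simp only [Complex.sub_re, Complex.ofReal_re, Complex.sub_im, Complex.ofReal_im, sub_zero] at hμ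
  nlinarith

namespace Matrix

variable {ι : Type*} [Fintype ι]

lemma re_map_mulVec (A : Matrix ι ι ℝ) (u : ι → ℂ) (i : ι) :
    ((A.map (algebraMap ℝ ℂ) *ᵥ u) i).re = (A *ᵥ fun j => (u j).re) i := by
  simp [mulVec, dotProduct, Complex.re_sum]

lemma im_map_mulVec (A : Matrix ι ι ℝ) (u : ι → ℂ) (i : ι) :
    ((A.map (algebraMap ℝ ℂ) *ᵥ u) i).im = (A *ᵥ fun j => (u j).im) i := by
  simp [mulVec, dotProduct, Complex.im_sum]

structure IsLaplacian (L : Matrix ι ι ℝ) : Prop where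
  nonpos_of_ne : ∀ i j, i ≠ j → L i j ≤ 0
  sum_eq_zero : ∀ i, ∑ j, L i j = 0

def IsSpanningTreeRoot (L : Matrix ι ι ℝ) (r : ι) : Prop :=
  ∀ i, Relation.ReflTransGen (fun j i => i ≠ j ∧ L i j < 0) r i

namespace IsLaplacian

variable {L : Matrix ι ι ℝ}

lemma mulVec_one (hL : L.IsLaplacian) : L *ᵥ 1 = 0 := by
  ext i
  simpa [mulVec, dotProduct] using hL.sum_eq_zero i

lemma mulVec_apply_eq_sum (hL : L.IsLaplacian) (v : ι → ℝ) (i : ι) :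
    (L *ᵥ v) i = ∑ j, L i j * (v j - v i) := by
  simp [mul_sub, sum_sub_distrib, ← sum_mul, hL.sum_eq_zero, mulVec, dotProduct]

lemma mul_sub_nonneg_of_forall_le (hL : L.IsLaplacian) {v : ι → ℝ} {i : ι}
    (hmax : ∀ j, v j ≤ v i) (j : ι) : 0 ≤ L i j * (v j - v i) := by
  obtain rfl | hji := eq_or_ne j i
  · simp
  · nlinarith [hL.nonpos_of_ne i j hji.symm, hmax j]

lemma mulVec_apply_nonneg_of_forall_le (hL : L.IsLaplacian) {v : ι → ℝ} {i : ι}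
    (hmax : ∀ j, v j ≤ v i) : 0 ≤ (L *ᵥ v) i := by
  rw [hL.mulVec_apply_eq_sum]
  exact sum_nonneg fun j _ => hL.mul_sub_nonneg_of_forall_le hmax j

lemma sum_norm_erase_eq_diag [DecidableEq ι] (hL : L.IsLaplacian) (i : ι) :
    ∑ j ∈ univ.erase i, ‖L i j‖ = L i i := by
  have hoff : ∑ j ∈ univ.erase i, L i j = -L i i := by
    rw [sum_erase_eq_sub (mem_univ i), hL.sum_eq_zero i, zero_sub]
  rw [← neg_neg (L i i), ← hoff, ← sum_neg_distrib]
  refine sum_congr rfl fun j hj => ?_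
  rw [Real.norm_of_nonpos (hL.nonpos_of_ne i j (ne_of_mem_erase hj).symm)]

lemma apply_eq_of_forall_le_of_mulVec_apply_eq_zero (hL : L.IsLaplacian) {v : ι → ℝ} {i : ι}
    (hmax : ∀ j, v j ≤ v i) (hv : (L *ᵥ v) i = 0) {j : ι} (hij : L i j < 0) : v j = v i := by
  rw [hL.mulVec_apply_eq_sum] at hv
  have hterm := (sum_eq_zero_iff_of_nonneg fun j _ => hL.mul_sub_nonneg_of_forall_le hmax j).mp
    hv j (mem_univ j)
  linarith [(mul_eq_zero.mp hterm).resolve_left hij.ne]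

lemma eq_zero_of_mulVec_eq_const [Nonempty ι] (hL : L.IsLaplacian) {w : ι → ℝ} {c : ℝ}
    (hw : L *ᵥ w = fun _ => c) : c = 0 := by
  obtain ⟨i, hi⟩ := Finite.exists_max w
  obtain ⟨i', hi'⟩ := Finite.exists_max (-w)
  have hc : 0 ≤ c := by simpa [hw] using hL.mulVec_apply_nonneg_of_forall_le hi
  have hnc : 0 ≤ -c := by
    simpa [mulVec_neg, hw] using hL.mulVec_apply_nonneg_of_forall_le hi'
  linarith

lemma le_apply_root_of_mulVec_eq_zero (hL : L.IsLaplacian) {r : ι} (hr : L.IsSpanningTreeRoot r)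
    {v : ι → ℝ} (hv : L *ᵥ v = 0) (i : ι) : v i ≤ v r := by
  have : Nonempty ι := ⟨r⟩
  obtain ⟨k, hk⟩ := Finite.exists_max v
  suffices ∀ i, Relation.ReflTransGen (fun j i => i ≠ j ∧ L i j < 0) r i → v i = v k → v r = v k
    from (this k (hr k) rfl).symm ▸ hk i
  intro i hpath
  induction hpath with
  | refl => exact id
  | tail _ hedge ih =>
    intro hmax
    exact ih <| .trans
      (hL.apply_eq_of_forall_le_of_mulVec_apply_eq_zero (hmax ▸ hk) (congrFun hv _) hedge.2) hmax

lemma apply_eq_of_mulVec_eq_zero (hL : L.IsLaplacian) {r : ι} (hr : L.IsSpanningTreeRoot r)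
    {v : ι → ℝ} (hv : L *ᵥ v = 0) (i : ι) : v i = v r := by
  have hneg := hL.le_apply_root_of_mulVec_eq_zero hr (v := -v) (by rw [mulVec_neg, hv, neg_zero]) i
  simp only [Pi.neg_apply, neg_le_neg_iff] at hneg
  exact le_antisymm (hL.le_apply_root_of_mulVec_eq_zero hr hv i) hneg

lemma apply_eq_of_map_mulVec_eq_zero (hL : L.IsLaplacian) {r : ι} (hr : L.IsSpanningTreeRoot r)
    {u : ι → ℂ} (hu : L.map (algebraMap ℝ ℂ) *ᵥ u = 0) (i : ι) : u i = u r := by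
  have hre : L *ᵥ (fun j => (u j).re) = 0 := by
    ext j; rw [← re_map_mulVec, hu]; rfl
  have him : L *ᵥ (fun j => (u j).im) = 0 := by
    ext j; rw [← im_map_mulVec, hu]; rfl
  exact Complex.ext (hL.apply_eq_of_mulVec_eq_zero hr hre i)
    (hL.apply_eq_of_mulVec_eq_zero hr him i)

lemma eq_zero_of_map_mulVec_eq_const [Nonempty ι] (hL : L.IsLaplacian) {x : ι → ℂ} {c : ℂ}
    (hx : L.map (algebraMap ℝ ℂ) *ᵥ x = fun _ => c) : c = 0 := by
  refine Complex.ext (hL.eq_zero_of_mulVec_eq_const (w := fun j => (x j).re) ?_)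
    (hL.eq_zero_of_mulVec_eq_const (w := fun j => (x j).im) ?_)
  · ext j; rw [← re_map_mulVec, hx]
  · ext j; rw [← im_map_mulVec, hx]

lemma ker_toLin'_map_eq_span_one [DecidableEq ι] (hL : L.IsLaplacian) {r : ι}
    (hr : L.IsSpanningTreeRoot r) :
    LinearMap.ker (toLin' (L.map (algebraMap ℝ ℂ))) = Submodule.span ℂ {1} := by
  ext u
  rw [LinearMap.mem_ker, toLin'_apply, Submodule.mem_span_singleton]
  refine ⟨fun hu => ⟨u r, funext fun i => ?_⟩, ?_⟩
  · simp [hL.apply_eq_of_map_mulVec_eq_zero hr hu i]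
  · rintro ⟨a, rfl⟩
    ext i
    simp [mulVec, dotProduct, ← sum_mul, ← Complex.ofReal_sum, hL.sum_eq_zero i]

lemma ker_toLin'_map_sq_le [DecidableEq ι] (hL : L.IsLaplacian) {r : ι}
    (hr : L.IsSpanningTreeRoot r) :
    LinearMap.ker (toLin' (L.map (algebraMap ℝ ℂ)) ^ 2) ≤
      LinearMap.ker (toLin' (L.map (algebraMap ℝ ℂ))) := by
  have : Nonempty ι := ⟨r⟩
  intro x hx
  rw [LinearMap.mem_ker, pow_two, Module.End.mul_apply, toLin'_apply, toLin'_apply] at hx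
  rw [LinearMap.mem_ker, toLin'_apply]
  have hconst := hL.apply_eq_of_map_mulVec_eq_zero hr hx
  have hzero := hL.eq_zero_of_map_mulVec_eq_const (funext hconst)
  exact funext fun i => (hconst i).trans hzero

lemma re_pos_of_hasEigenvalue [DecidableEq ι] (hL : L.IsLaplacian) {μ : ℂ}
    (hμ : HasEigenvalue (toLin' (L.map (algebraMap ℝ ℂ))) μ) (h0 : μ ≠ 0) : 0 < μ.re := by
  obtain ⟨k, hk⟩ := eigenvalue_mem_ball hμ
  simp only [map_apply, Complex.coe_algebraMap, Complex.norm_real, hL.sum_norm_erase_eq_diag]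
    at hk
  exact Complex.re_pos_of_mem_closedBall_ofReal hk h0

end IsLaplacian

end Matrix

/-- If `L` is an `N × N` Laplacian matrix whose associated directed graph
(an edge from `j` to `i` whenever `i ≠ j` and `L i j < 0`) contains a directed spanning tree,
then `0` is an algebraically simple eigenvalue of `L` (a root of multiplicity exactly `1` of
its characteristic polynomial), the all-ones vector is an eigenvector of `L` for the eigenvalue
`0`, and every other complex eigenvalue `μ` of `L` satisfies `Re μ > 0`. -/
theorem laplacian_spanningTree_zero_simple_eigenvalue (N : ℕ)
    (L : Matrix (Fin N) (Fin N) ℝ)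
    (hoff : ∀ i j : Fin N, i ≠ j → L i j ≤ 0)
    (hrow : ∀ i : Fin N, ∑ j, L i j = 0)
    (htree : ∃ r : Fin N, ∀ i : Fin N,
      Relation.ReflTransGen (fun j i : Fin N => i ≠ j ∧ L i j < 0) r i) :
    ((L.map (algebraMap ℝ ℂ)).charpoly.rootMultiplicity 0 = 1) ∧
    (L.mulVec (fun _ => (1 : ℝ)) = 0) ∧
    (∀ μ : ℂ, (L.map (algebraMap ℝ ℂ)).charpoly.IsRoot μ → μ ≠ 0 → 0 < μ.re) := by
  obtain ⟨r, hr⟩ := htree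
  have : Nonempty (Fin N) := ⟨r⟩
  have hL : L.IsLaplacian := ⟨hoff, hrow⟩
  refine ⟨?_, hL.mulVec_one, fun μ hμ h0 => hL.re_pos_of_hasEigenvalue ?_ h0⟩
  · rw [← charpoly_toLin', ← LinearMap.finrank_maxGenEigenspace_eq,
      maxGenEigenspace_zero_eq_ker (hL.ker_toLin'_map_sq_le hr), hL.ker_toLin'_map_eq_span_one hr,
      finrank_span_singleton one_ne_zero]
  · rwa [hasEigenvalue_iff_isRoot_charpoly, charpoly_toLin']
end
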